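/- Assume W·B·W = B, 0 < δ ≤ r₀/2, 0 < ε ≤ δ/4, and let D > 0 be a constant such that m(Ω_{δ'−ε',B}) ≥ (1 − Dε'/δ')·m(Ω_{δ',B}) for all 0 < δ' ≤ r₀/2 and 0 < ε' ≤ δ'/2. If α > 0, ε < δ/(2D), and there exists h ∈ U_ε with (1/m(Ω_{δ−2ε,B})) ∫_{Ω_{δ−2ε,B}} φ_ε(g⁻¹hΓ') dm(g) ≥ 1/V(Γ) − α, then |sΓt⁻¹ ∩ Ω_{δ,B}| ≥ (1/V(Γ) − α)·(1 − 2Dε/δ)·m(Ω_{δ,B}). -/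

import Mathlib

/-!
Unfolding `φ_ε`, the integral of `g ↦ φ_ε(g⁻¹hΓ')` over `Ω_{δ-2ε,B}` is a sum over
`x ∈ sΓt⁻¹` of the mass that `g ↦ χ_ε(g⁻¹hx)` puts on `Ω_{δ-2ε,B}`. By left invariance each
term is at most `1`, and it vanishes unless `x ∈ h⁻¹ Ω_{δ-2ε,B} U_ε ⊆ U_ε Ω_{δ-2ε,B} U_ε = Ω_{δ,B}`.
Hence the integral is at most `|sΓt⁻¹ ∩ Ω_{δ,B}|`; this count is finite because `sΓt⁻¹` is
uniformly discrete while `Ω_{δ,B} U_ε` has finite measure, so disjoint small translates of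
its points cannot all fit. The regularity bound `m(Ω_{δ-2ε,B}) ≥ (1 - 2Dε/δ) m(Ω_{δ,B})` then
replaces the normalisation by `m(Ω_{δ,B})`.
-/

open MeasureTheory Set Pointwise Filter Topology

open scoped ENNReal

def IsUniformlyDiscrete {G : Type*} [Group G] [TopologicalSpace G] (S : Set G) : Prop :=
  ∃ V ∈ 𝓝 (1 : G), ∀ x ∈ S, ∀ y ∈ S, x⁻¹ * y ∈ V → x = y

section UniformlyDiscrete

variable {G : Type*} [Group G] [TopologicalSpace G] [IsTopologicalGroup G]

theorem Subgroup.isUniformlyDiscrete_image_mul_mul_inv (Γ : Subgroup G) [DiscreteTopology Γ]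
    (s t : G) : IsUniformlyDiscrete ((fun γ => s * γ * t⁻¹) '' (Γ : Set G)) := by
  obtain ⟨U, hUopen, hUΓ⟩ :=
    discreteTopology_subtype_iff'.mp ‹DiscreteTopology Γ› 1 Γ.one_mem
  have h1U : (1 : G) ∈ U := (hUΓ.symm.subset rfl).1
  have hconj : Continuous fun x : G => t⁻¹ * x * t := by fun_prop
  refine ⟨(fun x => t⁻¹ * x * t) ⁻¹' U,
    hconj.continuousAt.preimage_mem_nhds (by simpa using hUopen.mem_nhds h1U), ?_⟩
  rintro _ ⟨γ, hγ, rfl⟩ _ ⟨γ', hγ', rfl⟩ hV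
  -- `(s γ t⁻¹)⁻¹ (s γ' t⁻¹)` is the `t`-conjugate of `γ⁻¹ γ' ∈ Γ`
  have hmem : γ⁻¹ * γ' ∈ U ∩ Γ :=
    ⟨by simpa [mul_assoc] using hV, Γ.mul_mem (Γ.inv_mem hγ) hγ'⟩
  rw [hUΓ, mem_singleton_iff, inv_mul_eq_one] at hmem
  rw [hmem]

variable [MeasurableSpace G] [BorelSpace G] (μ : Measure G) [μ.IsMulLeftInvariant]
  [μ.IsOpenPosMeasure]

theorem IsUniformlyDiscrete.finite_inter {S A N : Set G} (hS : IsUniformlyDiscrete S)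
    (hN : N ∈ 𝓝 (1 : G)) (hAN : μ (A * N) ≠ ∞) : (S ∩ A).Finite := by
  obtain ⟨V, hV, hSV⟩ := hS
  have hdiv : ∀ᶠ p in 𝓝 (1 : G) ×ˢ 𝓝 1, p.1 * p.2⁻¹ ∈ V := by
    rw [← nhds_prod_eq]
    exact (continuous_fst.mul continuous_snd.inv).continuousAt.preimage_mem_nhds
      (by simpa using hV)
  obtain ⟨T, hT, hTV⟩ := (eventually_prod_self_iff (r := fun a b => a * b⁻¹ ∈ V)).mp hdiv
  obtain ⟨K, hKsub, hKopen, hK1⟩ := mem_nhds_iff.mp (inter_mem hT hN)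
  have hdisj : Pairwise (Function.onFun Disjoint fun x : ↥(S ∩ A) => (x : G) • K) := by
    intro x y hxy
    refine Set.disjoint_left.mpr ?_
    rintro _ ⟨k, hk, rfl⟩ ⟨k', hk', hkk'⟩
    refine hxy (Subtype.ext (hSV _ x.2.1 _ y.2.1 ?_))
    have hxy' : (x : G)⁻¹ * y = k * k'⁻¹ := by
      simp only [smul_eq_mul] at hkk'
      rw [inv_mul_eq_iff_eq_mul, ← mul_assoc, eq_mul_inv_iff_mul_eq, hkk']
    exact hxy' ▸ hTV k (hKsub hk).1 k' (hKsub hk').1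
  have hunion : μ (⋃ x : ↥(S ∩ A), (x : G) • K) ≠ ∞ := by
    refine ne_top_of_le_ne_top hAN (measure_mono (iUnion_subset fun x => ?_))
    rintro _ ⟨k, hk, rfl⟩
    exact mul_mem_mul x.2.2 (hKsub hk).2
  have hfin := Measure.finite_const_le_meas_of_disjoint_iUnion μ
    (hKopen.measure_pos μ ⟨1, hK1⟩) (fun x => hKopen.measurableSet.const_smul _) hdisj hunion
  simp only [measure_smul, le_refl, ofPred_true] at hfin
  exact Set.finite_coe_iff.mp (Set.finite_univ_iff.mp hfin)

end UniformlyDiscrete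

section Integral

variable {G : Type*} [Group G]

theorem Set.preimage_inv_mul_const (U : Set G) (y : G) :
    (fun g => g⁻¹ * y) ⁻¹' U = y • U⁻¹ := by
  ext g
  rw [mem_preimage, mem_smul_set_iff_inv_smul_mem, smul_eq_mul, Set.mem_inv, mul_inv_rev,
    inv_inv]

variable [MeasurableSpace G] [MeasurableMul G] [MeasurableInv G] {μ : Measure G} {U : Set G}

theorem setLIntegral_indicator_inv_mul (hU : MeasurableSet U) (Ω : Set G) (y : G)
    (c : ℝ≥0∞) : ∫⁻ g in Ω, U.indicator (fun _ => c) (g⁻¹ * y) ∂μ = c * μ (y • U⁻¹ ∩ Ω) := by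
  rw [lintegral_indicator_const_comp (by fun_prop) hU, U.preimage_inv_mul_const y,
    Measure.restrict_apply (hU.inv.const_smul y)]

theorem setLIntegral_tsum_indicator_le_encard [μ.IsMulLeftInvariant] (hU : MeasurableSet U)
    (hUinv : U⁻¹ = U) {S : Set G} [Countable S] {Ω A : Set G} (h : G)
    (hA : ∀ x, ∀ g ∈ Ω, g⁻¹ * h * x ∈ U → x ∈ A) (c : ℝ≥0∞) :
    ∫⁻ g in Ω, ∑' x : S, U.indicator (fun _ => c) (g⁻¹ * h * x) ∂μ
      ≤ c * μ U * (S ∩ A).encard := by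
  have hterm : ∀ x : G, ∫⁻ g in Ω, U.indicator (fun _ => c) (g⁻¹ * h * x) ∂μ
      ≤ A.indicator (fun _ => c * μ U) x := by
    intro x
    simp only [mul_assoc, setLIntegral_indicator_inv_mul hU]
    by_cases hx : x ∈ A
    · rw [indicator_of_mem hx]
      refine mul_le_mul_right ((measure_mono inter_subset_left).trans ?_) c
      rw [measure_smul, hUinv]
    · suffices (h * x) • U⁻¹ ∩ Ω = ∅ by simp [this]
      refine eq_empty_of_forall_notMem fun g ⟨hgU, hgΩ⟩ => hx (hA x g hgΩ ?_)
      rw [← preimage_inv_mul_const] at hgU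
      simpa [mul_assoc] using hgU
  calc ∫⁻ g in Ω, ∑' x : S, U.indicator (fun _ => c) (g⁻¹ * h * x) ∂μ
      = ∑' x : S, ∫⁻ g in Ω, U.indicator (fun _ => c) (g⁻¹ * h * x) ∂μ :=
        lintegral_tsum fun x => by fun_prop
    _ ≤ ∑' x : S, A.indicator (fun _ => c * μ U) x := ENNReal.tsum_le_tsum fun x => hterm x
    _ = c * μ U * (S ∩ A).encard := by
        rw [tsum_subtype S (A.indicator _), indicator_indicator, ← tsum_subtype,
          ENNReal.tsum_set_const, mul_comm]

theorem ENNReal.enorm_toReal_inv_mul_le_one (m : ℝ≥0∞) : ‖m.toReal⁻¹‖ₑ * m ≤ 1 := by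
  rcases eq_or_ne m ∞ with rfl | hm
  · simp
  rcases eq_or_ne m 0 with rfl | hm₀
  · simp
  rw [enorm_inv (ENNReal.toReal_ne_zero.mpr ⟨hm₀, hm⟩), Real.enorm_toReal hm]
  exact ENNReal.inv_mul_le_one m

theorem setIntegral_tsum_indicator_le_ncard [μ.IsMulLeftInvariant] (hU : MeasurableSet U)
    (hUinv : U⁻¹ = U) {S : Set G} [Countable S] {Ω A : Set G} (hSA : (S ∩ A).Finite)
    (h : G) (hA : ∀ x, ∀ g ∈ Ω, g⁻¹ * h * x ∈ U → x ∈ A) :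
    ∫ g in Ω, ∑' x : S, U.indicator (fun _ => (μ U).toReal⁻¹) (g⁻¹ * h * x) ∂μ
      ≤ (S ∩ A).ncard := by
  set c := (μ U).toReal⁻¹
  set F := fun g => ∑' x : S, U.indicator (fun _ => c) (g⁻¹ * h * x)
  have hlint : ∫⁻ g in Ω, ENNReal.ofReal ‖F g‖ ∂μ ≤ (S ∩ A).ncard := by
    calc ∫⁻ g in Ω, ENNReal.ofReal ‖F g‖ ∂μ
        ≤ ∫⁻ g in Ω, ∑' x : S, U.indicator (fun _ => ‖c‖ₑ) (g⁻¹ * h * x) ∂μ := by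
          refine lintegral_mono fun g => ?_
          simp only [F, ofReal_norm, ← enorm_indicator_eq_indicator_enorm]
          exact enorm_tsum_le_tsum_enorm
      _ ≤ ‖c‖ₑ * μ U * (S ∩ A).encard :=
          setLIntegral_tsum_indicator_le_encard hU hUinv h hA _
      _ ≤ (S ∩ A).encard :=
          mul_le_of_le_one_left zero_le (ENNReal.enorm_toReal_inv_mul_le_one _)
      _ = (S ∩ A).ncard := by rw [← hSA.cast_ncard_eq]; rfl
  calc ∫ g in Ω, F g ∂μ ≤ ‖∫ g in Ω, F g ∂μ‖ := Real.le_norm_self _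
    _ ≤ (∫⁻ g in Ω, ENNReal.ofReal ‖F g‖ ∂μ).toReal := norm_integral_le_lintegral_norm _
    _ ≤ ((S ∩ A).ncard : ℝ≥0∞).toReal := ENNReal.toReal_mono (by simp) hlint
    _ = (S ∩ A).ncard := ENNReal.toReal_natCast _

end Integral

theorem mul_mul_le_of_le_inv_mul {a κ M m n : ℝ} (ha : a ≤ m⁻¹ * n) (hκM : κ * M ≤ m)
    (hκ : 0 ≤ κ) (hM : 0 ≤ M) (hn : 0 ≤ n) : a * κ * M ≤ n := by
  rw [mul_assoc]
  rcases le_or_gt a 0 with ha₀ | ha₀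
  · exact (mul_nonpos_of_nonpos_of_nonneg ha₀ (mul_nonneg hκ hM)).trans hn
  calc a * (κ * M) ≤ m⁻¹ * n * m := mul_le_mul ha hκM (mul_nonneg hκ hM) (ha₀.le.trans ha)
    _ = n * (m⁻¹ * m) := by ring
    _ ≤ n := mul_le_of_le_one_right hn inv_mul_le_one

theorem ENNReal.mul_toReal_le_toReal_of_ofReal_mul_le {κ : ℝ} {a b : ℝ≥0∞} (hκ : 0 ≤ κ)
    (hb : b ≠ ∞) (h : ENNReal.ofReal κ * a ≤ b) : κ * a.toReal ≤ b.toReal := by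
  rw [← ENNReal.toReal_ofReal hκ, ← ENNReal.toReal_mul]
  exact ENNReal.toReal_mono hb h

theorem prod_mul_prod_mul_prod_eq {G₁ G₂ : Type*} [Group G₁] [Group G₂] {O : ℝ → Set G₁}
    {r₀ : ℝ} (hO : ∀ r r' : ℝ, 0 < r → 0 < r' → r + r' ≤ r₀ → O r * O r' = O (r + r'))
    {W B : Set G₂} (hWBW : W * B * W = B) {a b : ℝ} (ha : 0 < a) (hb : 0 < b)
    (hab : 2 * a + b ≤ r₀) : O a ×ˢ W * O b ×ˢ B * O a ×ˢ W = O (2 * a + b) ×ˢ B := by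
  rw [prod_mul_prod_comm, prod_mul_prod_comm, hO _ _ ha hb (by linarith),
    hO _ _ (by linarith) ha (by linarith), hWBW, show a + b + a = 2 * a + b by ring]

theorem one_sub_two_mul_div_nonneg {D ε δ : ℝ} (hε : 0 < ε) (hδ : 0 < δ)
    (hεD : ε < δ / (2 * D)) : 0 ≤ 1 - 2 * D * ε / δ := by
  suffices 2 * D * ε ≤ δ by rwa [sub_nonneg, div_le_one hδ]
  rcases le_or_gt D 0 with hD | hD
  · nlinarith
  · linarith [(lt_div_iff₀ (by linarith)).mp hεD]

theorem stmt9_general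
    {Ginf Gf : Type*}
    [Group Ginf] [TopologicalSpace Ginf] [IsTopologicalGroup Ginf]
    [LocallyCompactSpace Ginf] [SecondCountableTopology Ginf]
    [MeasurableSpace Ginf] [BorelSpace Ginf]
    [Group Gf] [TopologicalSpace Gf] [IsTopologicalGroup Gf]
    [LocallyCompactSpace Gf] [SecondCountableTopology Gf]
    [MeasurableSpace Gf] [BorelSpace Gf]
    (minf : Measure Ginf) [Measure.IsHaarMeasure minf]
    (mf : Measure Gf) [Measure.IsHaarMeasure mf]
    (r₀ : ℝ) (d : ℝ)
    (p : ℝ → ℝ)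
    (O : ℝ → Set Ginf)
    (hOmeas : ∀ r ∈ Ioc (0:ℝ) r₀, MeasurableSet (O r))
    (hOsymm : ∀ r ∈ Ioc (0:ℝ) r₀, (O r)⁻¹ = O r)
    (hOnhd : ∀ r ∈ Ioc (0:ℝ) r₀, O r ∈ nhds (1 : Ginf))
    (hOprod : ∀ r r' : ℝ, 0 < r → 0 < r' → r + r' ≤ r₀ → O r * O r' = O (r + r'))
    (hOvol : ∀ r ∈ Ioc (0:ℝ) r₀, minf (O r) = ENNReal.ofReal (r ^ d * p r))
    -- the lattice `Γ`, of covolume `V`, and the elements `s`, `t`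
    (Γ : Subgroup (Ginf × Gf)) (hΓdisc : DiscreteTopology Γ)
    (V : ℝ)
    (s t : Ginf × Gf)
    -- the compact open subgroup `W` and the set `B`
    (W : Subgroup Gf) (hWopen : IsOpen (W : Set Gf))
    (B : Set Gf) (hBfin : mf B < ⊤)
    (hWBW : (W : Set Gf) * B * (W : Set Gf) = B)
    -- the parameters `δ`, `ε` and the regularity constant `D`
    (δ ε : ℝ) (hδ0 : 0 < δ) (hδr : δ ≤ r₀ / 2) (hε0 : 0 < ε) (hεδ : ε ≤ δ / 4)
    (D : ℝ)
    (hDreg : ∀ δ' ε' : ℝ, 0 < δ' → δ' ≤ r₀ / 2 → 0 < ε' → ε' ≤ δ' / 2 →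
      ENNReal.ofReal (1 - D * ε' / δ') * (minf.prod mf) ((O δ') ×ˢ B)
        ≤ (minf.prod mf) ((O (δ' - ε')) ×ˢ B))
    -- the averaging bound at some point `h ∈ U_ε`
    (α : ℝ) (hεD : ε < δ / (2 * D))
    (havg : ∃ h ∈ (O ε) ×ˢ (W : Set Gf),
      1 / V - α ≤
      (((minf.prod mf) ((O (δ - 2*ε)) ×ˢ B)).toReal)⁻¹
          * ∫ g in (O (δ - 2*ε)) ×ˢ B,
              (∑' γ : ((fun γ : Ginf × Gf => s * γ * t⁻¹) '' (Γ : Set (Ginf × Gf))),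
                Set.indicator ((O ε) ×ˢ (W : Set Gf))
                  (fun _ => (((minf.prod mf) ((O ε) ×ˢ (W : Set Gf))).toReal)⁻¹)
                  (g⁻¹ * h * γ)) ∂(minf.prod mf)) :
    (1 / V - α) * (1 - 2 * D * ε / δ) * ((minf.prod mf) ((O δ) ×ˢ B)).toReal
      ≤ (((fun γ : Ginf × Gf => s * γ * t⁻¹) '' (Γ : Set (Ginf × Gf))
        ∩ (O δ) ×ˢ B).ncard : ℝ) := by
  obtain ⟨h, hhU, havg⟩ := havg
  set μ := minf.prod mf
  set S := (fun γ : Ginf × Gf => s * γ * t⁻¹) '' (Γ : Set (Ginf × Gf))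
  set U := O ε ×ˢ (W : Set Gf)
  have hεr : ε ∈ Ioc 0 r₀ := ⟨hε0, by linarith⟩
  have hfinite : ∀ r ∈ Ioc 0 r₀, μ (O r ×ˢ B) ≠ ∞ := fun r hr => by
    rw [Measure.prod_prod, hOvol r hr]
    exact ENNReal.mul_ne_top ENNReal.ofReal_ne_top hBfin.ne
  have hUinv : U⁻¹ = U := by rw [inv_prod, hOsymm ε hεr, inv_coe_set]
  have hU1 : (1 : Ginf × Gf) ∈ U := ⟨mem_of_mem_nhds (hOnhd ε hεr), W.one_mem⟩
  have hUΩU : U * O (δ - 2 * ε) ×ˢ B * U = O δ ×ˢ B := by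
    rw [prod_mul_prod_mul_prod_eq hOprod hWBW hε0 (by linarith : 0 < δ - 2 * ε) (by linarith),
      show 2 * ε + (δ - 2 * ε) = δ by ring]
  have hSfin : (S ∩ O δ ×ˢ B).Finite := by
    refine (Γ.isUniformlyDiscrete_image_mul_mul_inv s t).finite_inter μ
      (prod_mem_nhds (hOnhd ε hεr) (hWopen.mem_nhds W.one_mem)) (ne_top_of_le_ne_top
        (hfinite (2 * ε + δ) ⟨by linarith, by linarith⟩) (measure_mono ?_))
    rw [← prod_mul_prod_mul_prod_eq hOprod hWBW hε0 hδ0 (by linarith)]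
    exact mul_subset_mul_right (subset_mul_right _ hU1)
  have : Countable Γ := countable_of_Lindelof_of_discrete
  have : Countable S := ((Set.countable_coe_iff.mp ‹_›).image _).to_subtype
  -- `x = h⁻¹ g (g⁻¹ h x)` with `h⁻¹ ∈ U`
  have hcount := setIntegral_tsum_indicator_le_ncard (μ := μ)
    ((hOmeas ε hεr).prod hWopen.measurableSet) hUinv hSfin h fun x g hg hgx =>
      hUΩU ▸ ⟨_, mul_mem_mul (hUinv ▸ inv_mem_inv.mpr hhU) hg, _, hgx, by group⟩
  have hκ := one_sub_two_mul_div_nonneg hε0 hδ0 hεD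
  have hreg := ENNReal.mul_toReal_le_toReal_of_ofReal_mul_le hκ
    (hfinite (δ - 2 * ε) ⟨by linarith, by linarith⟩) (by
      rw [show 2 * D * ε = D * (2 * ε) by ring]
      exact hDreg δ (2 * ε) hδ0 hδr (by linarith) (by linarith))
  exact mul_mul_le_of_le_inv_mul (havg.trans (mul_le_mul_of_nonneg_left hcount (by positivity)))
    hreg hκ ENNReal.toReal_nonneg (Nat.cast_nonneg _)

/-- Lower bound step: if `W·B·W = B`, `0 < δ ≤ r₀/2`, `0 < ε ≤ δ/4`,
`D > 0` satisfies the lower volume-regularity property, `α > 0`, `ε < δ/(2D)`, and there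
is `h ∈ U_ε` with `(1/m(Ω_{δ−2ε,B})) ∫_{Ω_{δ−2ε,B}} φ_ε(g⁻¹hΓ') dm(g) ≥ 1/V(Γ) − α`,
then `|sΓt⁻¹ ∩ Ω_{δ,B}| ≥ (1/V(Γ) − α)·(1 − 2Dε/δ)·m(Ω_{δ,B})`. -/
theorem stmt9
    {Ginf Gf : Type*}
    [Group Ginf] [TopologicalSpace Ginf] [IsTopologicalGroup Ginf]
    [LocallyCompactSpace Ginf] [SecondCountableTopology Ginf]
    [MeasurableSpace Ginf] [BorelSpace Ginf]
    [Group Gf] [TopologicalSpace Gf] [IsTopologicalGroup Gf]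
    [LocallyCompactSpace Gf] [SecondCountableTopology Gf]
    [TotallyDisconnectedSpace Gf]
    [MeasurableSpace Gf] [BorelSpace Gf]
    (minf : Measure Ginf) [Measure.IsHaarMeasure minf]
    (mf : Measure Gf) [Measure.IsHaarMeasure mf]
    (hunimod : (minf.prod mf).IsMulRightInvariant)
    (r₀ : ℝ) (hr₀ : 0 < r₀) (d : ℝ) (hd : 0 < d)
    (p : ℝ → ℝ) (L : NNReal) (hp : LipschitzOnWith L p (Icc 0 r₀))
    (hppos : ∀ r ∈ Icc (0:ℝ) r₀, 0 < p r)
    (O : ℝ → Set Ginf)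
    (hOmeas : ∀ r ∈ Ioc (0:ℝ) r₀, MeasurableSet (O r))
    (hOsymm : ∀ r ∈ Ioc (0:ℝ) r₀, (O r)⁻¹ = O r)
    (hObdd : ∀ r ∈ Ioc (0:ℝ) r₀, IsCompact (closure (O r)))
    (hOnhd : ∀ r ∈ Ioc (0:ℝ) r₀, O r ∈ nhds (1 : Ginf))
    (hOprod : ∀ r r' : ℝ, 0 < r → 0 < r' → r + r' ≤ r₀ → O r * O r' = O (r + r'))
    (hOvol : ∀ r ∈ Ioc (0:ℝ) r₀, minf (O r) = ENNReal.ofReal (r ^ d * p r))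
    -- the lattice `Γ`, of covolume `V`, and the elements `s`, `t`
    (Γ : Subgroup (Ginf × Gf)) (hΓdisc : DiscreteTopology Γ)
    (V : ℝ) (hV : 0 < V)
    (F : Set (Ginf × Gf)) (hFmeas : MeasurableSet F)
    (hFfund : ∀ g : Ginf × Gf, ∃! γ : Γ, g * (γ : Ginf × Gf) ∈ F)
    (hFV : (minf.prod mf) F = ENNReal.ofReal V)
    (s t : Ginf × Gf)
    -- the compact open subgroup `W` and the set `B`
    (W : Subgroup Gf) (hWcomp : IsCompact (W : Set Gf)) (hWopen : IsOpen (W : Set Gf))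
    (B : Set Gf) (hBmeas : MeasurableSet B) (hB0 : 0 < mf B) (hBfin : mf B < ⊤)
    (hWBW : (W : Set Gf) * B * (W : Set Gf) = B)
    -- the parameters `δ`, `ε` and the regularity constant `D`
    (δ ε : ℝ) (hδ0 : 0 < δ) (hδr : δ ≤ r₀ / 2) (hε0 : 0 < ε) (hεδ : ε ≤ δ / 4)
    (D : ℝ) (hD0 : 0 < D)
    (hDreg : ∀ δ' ε' : ℝ, 0 < δ' → δ' ≤ r₀ / 2 → 0 < ε' → ε' ≤ δ' / 2 →
      ENNReal.ofReal (1 - D * ε' / δ') * (minf.prod mf) ((O δ') ×ˢ B)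
        ≤ (minf.prod mf) ((O (δ' - ε')) ×ˢ B))
    -- the averaging bound at some point `h ∈ U_ε`
    (α : ℝ) (hα : 0 < α) (hεD : ε < δ / (2 * D))
    (havg : ∃ h ∈ (O ε) ×ˢ (W : Set Gf),
      1 / V - α ≤
      (((minf.prod mf) ((O (δ - 2*ε)) ×ˢ B)).toReal)⁻¹
          * ∫ g in (O (δ - 2*ε)) ×ˢ B,
              (∑' γ : ((fun γ : Ginf × Gf => s * γ * t⁻¹) '' (Γ : Set (Ginf × Gf))),
                Set.indicator ((O ε) ×ˢ (W : Set Gf))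
                  (fun _ => (((minf.prod mf) ((O ε) ×ˢ (W : Set Gf))).toReal)⁻¹)
                  (g⁻¹ * h * γ)) ∂(minf.prod mf)) :
    (1 / V - α) * (1 - 2 * D * ε / δ) * ((minf.prod mf) ((O δ) ×ˢ B)).toReal
      ≤ (((fun γ : Ginf × Gf => s * γ * t⁻¹) '' (Γ : Set (Ginf × Gf))
        ∩ (O δ) ×ˢ B).ncard : ℝ) :=
  stmt9_general minf mf r₀ d p O hOmeas hOsymm hOnhd hOprod hOvol Γ hΓdisc V s t W hWopen B hBfin
    hWBW δ ε hδ0 hδr hε0 hεδ D hDreg α hεD havg
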